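/- Let (F_t^B) be a filtration, and suppose at each round t: π_t ∈ [π_min, 1] is F_{t-1}^B-measurable with π_min > 0; B_t is a Bernoulli(π_t) random variable conditionally independent (given F_{t-1}^B) of a bounded random variable X_t with |X_t| ≤ 1-α; and E[X_t | F_{t-1}^B] ≥ 0. Define X̃_t := (B_t/π_t)·X_t and let λ_t be F_{t-1}^B-measurable with λ_t ∈ [0, π_min/(1-α)]. Then Ẽ_t := ∏_{s=1}^t (1 - λ_s X̃_s) is a nonnegative supermartingale with Ẽ_0 = 1, and moreover E[X̃_t | F_{t-1}^B] = E[X_t | F_{t-1}^B]. -/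

import Mathlib

/-!
Conditional independence gives `E[B t X t | F (t-1)] = π t E[X t | F (t-1)]`, and
as `π t` is predictable it can be divided out:
`E[(B t / π t) X t | F (t-1)] = (π t)⁻¹ E[B t X t | F (t-1)] = E[X t | F (t-1)] ≥ 0`, so
inverse-propensity weighting keeps the increments nonnegative in conditional mean. Pulling
the predictable bet and the past product out of the conditional expectation then gives
`E[Ẽ (t+1) | F t] = Ẽ t (1 - λ (t+1) E[X̃ (t+1) | F t]) ≤ Ẽ t`. The clipping
`λ ≤ π_min / (1 - α)` against `|X̃| ≤ (1 - α) / π_min` keeps every factor in `[0, 2]`, which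
gives nonnegativity and, through boundedness, the integrability the argument needs.
-/

open MeasureTheory Finset

lemma abs_div_mul_le_div {b p x c π₀ : ℝ} (hb : |b| ≤ 1) (hπ₀ : 0 < π₀) (hp : π₀ ≤ p)
    (hx : |x| ≤ c) : |b / p * x| ≤ c / π₀ := by
  have hp₀ : 0 < p := hπ₀.trans_le hp
  calc |b / p * x| = |b| * |x| / p := by rw [abs_mul, abs_div, abs_of_pos hp₀]; ring
    _ ≤ 1 * c / p := by gcongr
    _ ≤ c / π₀ := by
      rw [one_mul]; exact div_le_div_of_nonneg_left ((abs_nonneg x).trans hx) hπ₀ hp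

lemma abs_mul_le_one_of_le_div {l x a b : ℝ} (hl₀ : 0 ≤ l) (hl : l ≤ b / a) (hx : |x| ≤ a / b) :
    |l * x| ≤ 1 :=
  calc |l * x| = l * |x| := by rw [abs_mul, abs_of_nonneg hl₀]
    _ ≤ b / a * (a / b) := mul_le_mul hl hx (abs_nonneg x) (hl₀.trans hl)
    _ ≤ 1 := by rw [div_mul_div_comm, mul_comm b a]; exact div_self_le_one _

section CondExp

variable {Ω : Type*} {m m0 : MeasurableSpace Ω} {μ : Measure Ω}

lemma integrable_of_abs_le [IsFiniteMeasure μ] (hm : m ≤ m0) {f : Ω → ℝ}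
    (hf : StronglyMeasurable[m] f) {C : ℝ} (hC : ∀ ω, |f ω| ≤ C) : Integrable f μ :=
  .of_bound (hf.mono hm).aestronglyMeasurable C (ae_of_all _ hC)

lemma condExp_inv_mul_ae_eq {p f g : Ω → ℝ} (hp : StronglyMeasurable[m] p)
    (hp₀ : ∀ᵐ ω ∂μ, p ω ≠ 0) (hf : Integrable f μ) (hpf : Integrable (p⁻¹ * f) μ)
    (hfg : μ[f | m] =ᵐ[μ] p * μ[g | m]) : μ[p⁻¹ * f | m] =ᵐ[μ] μ[g | m] := by
  filter_upwards [condExp_mul_of_stronglyMeasurable_left hp.measurable.inv.stronglyMeasurable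
    hpf hf, hfg, hp₀] with ω hpull hω hpω
  rw [hpull, Pi.mul_apply, hω, Pi.mul_apply, Pi.inv_apply, inv_mul_cancel_left₀ hpω]

lemma condExp_div_mul_ae_eq [IsFiniteMeasure μ] (hm : m ≤ m0) {p B X : Ω → ℝ} {π₀ c : ℝ}
    (hp : StronglyMeasurable[m] p) (hπ₀ : 0 < π₀) (hp_ge : ∀ ω, π₀ ≤ p ω)
    (hB : AEStronglyMeasurable B μ) (hB_abs : ∀ ω, |B ω| ≤ 1)
    (hX : AEStronglyMeasurable X μ) (hX_abs : ∀ ω, |X ω| ≤ c)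
    (hBX : μ[B * X | m] =ᵐ[μ] p * μ[X | m]) :
    μ[fun ω => B ω / p ω * X ω | m] =ᵐ[μ] μ[X | m] := by
  have hBX_abs : ∀ ω, ‖(B * X) ω‖ ≤ c := fun ω => by
    rw [Real.norm_eq_abs, Pi.mul_apply, abs_mul]
    exact (mul_le_of_le_one_left (abs_nonneg _) (hB_abs ω)).trans (hX_abs ω)
  have h_eq : (fun ω => B ω / p ω * X ω) = p⁻¹ * (B * X) :=
    funext fun ω => by rw [Pi.mul_apply, Pi.mul_apply, Pi.inv_apply]; ring
  have hpBX : AEStronglyMeasurable (p⁻¹ * (B * X)) μ :=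
    (hp.mono hm).measurable.inv.aestronglyMeasurable.mul (hB.mul hX)
  rw [h_eq]
  refine condExp_inv_mul_ae_eq hp (ae_of_all _ fun ω => (hπ₀.trans_le (hp_ge ω)).ne')
    (.of_bound (hB.mul hX) c (ae_of_all _ hBX_abs)) (.of_bound hpBX (c / π₀) ?_) hBX
  exact ae_of_all _ fun ω => h_eq ▸ abs_div_mul_le_div (hB_abs ω) hπ₀ (hp_ge ω) (hX_abs ω)

lemma condExp_one_sub_mul_le_one [IsFiniteMeasure μ] (hm : m ≤ m0) {l Z : Ω → ℝ}
    (hl : StronglyMeasurable[m] l) (hl₀ : 0 ≤ᵐ[μ] l) (hZ : Integrable Z μ)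
    (hlZ : Integrable (l * Z) μ) (hZ_cond : 0 ≤ᵐ[μ] μ[Z | m]) : μ[1 - l * Z | m] ≤ᵐ[μ] 1 := by
  have hsub : μ[1 - l * Z | m] =ᵐ[μ] 1 - μ[l * Z | m] := by
    refine (condExp_sub (integrable_const 1) hlZ m).trans ?_
    rw [show (1 : Ω → ℝ) = fun _ => 1 from rfl, condExp_const hm]
  filter_upwards [hsub, condExp_mul_of_stronglyMeasurable_left hl hlZ hZ, hl₀, hZ_cond]
    with ω hω hpull hlω hZω
  rw [hω, Pi.sub_apply, hpull, Pi.mul_apply]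
  exact sub_le_self _ (mul_nonneg hlω hZω)

end CondExp

section Product

variable {Ω : Type*} {m0 : MeasurableSpace Ω} {μ : Measure Ω} [IsFiniteMeasure μ]
  {ℱ : Filtration ℕ m0}

lemma supermartingale_prod_Icc {Y : ℕ → Ω → ℝ} {C : ℝ}
    (hY_meas : ∀ s, 1 ≤ s → StronglyMeasurable[ℱ s] (Y s))
    (hY_nonneg : ∀ s ω, 0 ≤ Y s ω) (hY_le : ∀ s ω, Y s ω ≤ C)
    (hY_cond : ∀ t, μ[Y (t + 1) | ℱ t] ≤ᵐ[μ] 1) :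
    Supermartingale (fun t ω => ∏ s ∈ Icc 1 t, Y s ω) ℱ μ := by
  set E : ℕ → Ω → ℝ := fun t ω => ∏ s ∈ Icc 1 t, Y s ω
  have hE_nonneg : ∀ t ω, 0 ≤ E t ω := fun t ω => prod_nonneg fun s _ => hY_nonneg s ω
  have hE_meas : StronglyAdapted ℱ E := fun t =>
    Finset.stronglyMeasurable_fun_prod _ fun s hs =>
      (hY_meas s (mem_Icc.mp hs).1).mono (ℱ.mono (mem_Icc.mp hs).2)
  have hE_int : ∀ t, Integrable (E t) μ := fun t =>
    integrable_of_abs_le (ℱ.le t) (hE_meas t) fun ω => by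
      rw [abs_of_nonneg (hE_nonneg t ω)]
      calc E t ω ≤ ∏ _s ∈ Icc 1 t, C :=
            prod_le_prod (fun s _ => hY_nonneg s ω) fun s _ => hY_le s ω
        _ = C ^ t := by rw [prod_const, Nat.card_Icc, Nat.add_sub_cancel]
  have hE_succ : ∀ t, E (t + 1) = E t * Y (t + 1) := fun t =>
    funext fun ω => prod_Icc_succ_top (Nat.le_add_left 1 t) _
  refine supermartingale_nat hE_meas hE_int fun t => ?_
  have hY_int : Integrable (Y (t + 1)) μ :=
    integrable_of_abs_le (ℱ.le (t + 1)) (hY_meas _ (Nat.le_add_left 1 t)) fun ω => by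
      rw [abs_of_nonneg (hY_nonneg _ ω)]; exact hY_le _ ω
  filter_upwards [condExp_mul_of_stronglyMeasurable_left (hE_meas t)
    (hE_succ t ▸ hE_int (t + 1)) hY_int, hY_cond t] with ω hpull hω
  rw [hE_succ, hpull, Pi.mul_apply]
  exact mul_le_of_le_one_right (hE_nonneg t ω) hω

lemma supermartingale_prod_one_sub_mul {l Z : ℕ → Ω → ℝ}
    (hl_meas : ∀ t, 1 ≤ t → StronglyMeasurable[ℱ (t - 1)] (l t)) (hl_nonneg : ∀ t ω, 0 ≤ l t ω)
    (hlZ_abs : ∀ t ω, |l t ω * Z t ω| ≤ 1)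
    (hZ_meas : ∀ t, 1 ≤ t → StronglyMeasurable[ℱ t] (Z t))
    (hZ_int : ∀ t, 1 ≤ t → Integrable (Z t) μ)
    (hZ_cond : ∀ t, 1 ≤ t → 0 ≤ᵐ[μ] μ[Z t | ℱ (t - 1)]) :
    Supermartingale (fun t ω => ∏ s ∈ Icc 1 t, (1 - l s ω * Z s ω)) ℱ μ := by
  have hlZ_meas : ∀ s, 1 ≤ s → StronglyMeasurable[ℱ s] (l s * Z s) := fun s hs =>
    ((hl_meas s hs).mono (ℱ.mono (Nat.sub_le s 1))).mul (hZ_meas s hs)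
  refine supermartingale_prod_Icc (C := 2)
    (fun s hs => stronglyMeasurable_const.sub (hlZ_meas s hs))
    (fun s ω => sub_nonneg.mpr (le_of_abs_le (hlZ_abs s ω)))
    (fun s ω => by linarith [neg_le_of_abs_le (hlZ_abs s ω)]) fun t => ?_
  have ht : 1 ≤ t + 1 := Nat.le_add_left 1 t
  exact condExp_one_sub_mul_le_one (ℱ.le t) (hl_meas (t + 1) ht)
    (ae_of_all _ (hl_nonneg _)) (hZ_int _ ht)
    (integrable_of_abs_le (ℱ.le (t + 1)) (hlZ_meas _ ht) (hlZ_abs _)) (hZ_cond _ ht)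

end Product

theorem sparse_verifier_eprocess_general
    {Ω : Type*} {m0 : MeasurableSpace Ω} {μ : Measure Ω} [IsProbabilityMeasure μ]
    (ℱ : Filtration ℕ m0) (α πmin : ℝ)
    (hπmin : 0 < πmin)
    (pr B X lam : ℕ → Ω → ℝ)
    (hprmeas : ∀ t, 1 ≤ t → StronglyMeasurable[ℱ (t - 1)] (pr t))
    (hprval : ∀ t ω, pr t ω ∈ Set.Icc πmin 1)
    (hBmeas : ∀ t, StronglyMeasurable[ℱ t] (B t))
    (hBval : ∀ t ω, B t ω = 0 ∨ B t ω = 1)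
    (hXmeas : ∀ t, StronglyMeasurable[ℱ t] (X t))
    (hXbdd : ∀ t ω, |X t ω| ≤ 1 - α)
    (hXnull : ∀ t, 1 ≤ t → ∀ᵐ ω ∂μ, 0 ≤ (μ[X t | ℱ (t - 1)]) ω)
    (hcondind : ∀ t, 1 ≤ t →
      μ[fun ω => B t ω * X t ω | ℱ (t - 1)]
        =ᵐ[μ] fun ω => pr t ω * (μ[X t | ℱ (t - 1)]) ω)
    (hlammeas : ∀ t, 1 ≤ t → StronglyMeasurable[ℱ (t - 1)] (lam t))
    (hlamval : ∀ t ω, lam t ω ∈ Set.Icc (0 : ℝ) (πmin / (1 - α)))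
    (Xt Et : ℕ → Ω → ℝ)
    (hXt : ∀ t ω, Xt t ω = B t ω / pr t ω * X t ω)
    (hEt : ∀ t ω, Et t ω = ∏ s ∈ Finset.Icc 1 t, (1 - lam s ω * Xt s ω)) :
    (Supermartingale Et ℱ μ ∧ (∀ ω, Et 0 ω = 1) ∧ ∀ t ω, 0 ≤ Et t ω) ∧
      ∀ t, 1 ≤ t → μ[Xt t | ℱ (t - 1)] =ᵐ[μ] μ[X t | ℱ (t - 1)] := by
  have hB_abs : ∀ t ω, |B t ω| ≤ 1 := fun t ω => by rcases hBval t ω with h | h <;> simp [h]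
  have hXt_abs : ∀ t ω, |Xt t ω| ≤ (1 - α) / πmin := fun t ω =>
    hXt t ω ▸ abs_div_mul_le_div (hB_abs t ω) hπmin (hprval t ω).1 (hXbdd t ω)
  have hbet_abs : ∀ t ω, |lam t ω * Xt t ω| ≤ 1 := fun t ω =>
    abs_mul_le_one_of_le_div (hlamval t ω).1 (hlamval t ω).2 (hXt_abs t ω)
  have hXt_meas : ∀ t, 1 ≤ t → StronglyMeasurable[ℱ t] (Xt t) := fun t ht => by
    rw [funext (hXt t)]
    exact ((hBmeas t).measurable.div ((hprmeas t ht).mono (ℱ.mono (Nat.sub_le t 1))).measurable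
      |>.mul (hXmeas t).measurable).stronglyMeasurable
  have hXt_cond : ∀ t, 1 ≤ t → μ[Xt t | ℱ (t - 1)] =ᵐ[μ] μ[X t | ℱ (t - 1)] := fun t ht => by
    rw [funext (hXt t)]
    exact condExp_div_mul_ae_eq (ℱ.le _) (hprmeas t ht) hπmin (fun ω => (hprval t ω).1)
      ((hBmeas t).mono (ℱ.le t)).aestronglyMeasurable (hB_abs t)
      ((hXmeas t).mono (ℱ.le t)).aestronglyMeasurable (hXbdd t) (hcondind t ht)
  obtain rfl : Et = fun t ω => ∏ s ∈ Icc 1 t, (1 - lam s ω * Xt s ω) :=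
    funext fun t => funext (hEt t)
  refine ⟨⟨?_, fun ω => by simp,
    fun t ω => prod_nonneg fun s _ => sub_nonneg.mpr (le_of_abs_le (hbet_abs s ω))⟩, hXt_cond⟩
  exact supermartingale_prod_one_sub_mul hlammeas (fun t ω => (hlamval t ω).1) hbet_abs hXt_meas
    (fun t ht => integrable_of_abs_le (ℱ.le t) (hXt_meas t ht) (hXt_abs t))
    fun t ht => Filter.EventuallyLE.trans_eq (hXnull t ht) (hXt_cond t ht).symm

/-- Sparse-verifier (importance-weighted) e-process validity: with predictable sampling
rates `π t ∈ [π_min, 1]`, Bernoulli coins `B t ∈ {0,1}` with conditional mean `π t`,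
conditionally independent of the bounded increment `X t` (`|X t| ≤ 1-α`,
`E[X t | F (t-1)] ≥ 0`) — expressed by the product rule
`E[B t · X t | F (t-1)] = π t · E[X t | F (t-1)]` — the importance-weighted increment
`X̃ t = (B t / π t) · X t` satisfies `E[X̃ t | F (t-1)] = E[X t | F (t-1)]`, and with
predictable bets `lam t ∈ [0, π_min/(1-α)]` the process
`Ẽ t = ∏_{s=1}^t (1 - lam s · X̃ s)` is a nonnegative supermartingale with `Ẽ 0 = 1`. -/
theorem sparse_verifier_eprocess
    {Ω : Type*} {m0 : MeasurableSpace Ω} {μ : Measure Ω} [IsProbabilityMeasure μ]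
    (ℱ : Filtration ℕ m0) (α πmin : ℝ)
    (hα : α ∈ Set.Ioo (0 : ℝ) 1) (hπmin : 0 < πmin)
    (pr B X lam : ℕ → Ω → ℝ)
    (hprmeas : ∀ t, 1 ≤ t → StronglyMeasurable[ℱ (t - 1)] (pr t))
    (hprval : ∀ t ω, pr t ω ∈ Set.Icc πmin 1)
    (hBmeas : ∀ t, StronglyMeasurable[ℱ t] (B t))
    (hBval : ∀ t ω, B t ω = 0 ∨ B t ω = 1)
    (hBmean : ∀ t, 1 ≤ t → μ[B t | ℱ (t - 1)] =ᵐ[μ] pr t)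
    (hXmeas : ∀ t, StronglyMeasurable[ℱ t] (X t))
    (hXbdd : ∀ t ω, |X t ω| ≤ 1 - α)
    (hXnull : ∀ t, 1 ≤ t → ∀ᵐ ω ∂μ, 0 ≤ (μ[X t | ℱ (t - 1)]) ω)
    (hcondind : ∀ t, 1 ≤ t →
      μ[fun ω => B t ω * X t ω | ℱ (t - 1)]
        =ᵐ[μ] fun ω => pr t ω * (μ[X t | ℱ (t - 1)]) ω)
    (hlammeas : ∀ t, 1 ≤ t → StronglyMeasurable[ℱ (t - 1)] (lam t))
    (hlamval : ∀ t ω, lam t ω ∈ Set.Icc (0 : ℝ) (πmin / (1 - α)))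
    (Xt Et : ℕ → Ω → ℝ)
    (hXt : ∀ t ω, Xt t ω = B t ω / pr t ω * X t ω)
    (hEt : ∀ t ω, Et t ω = ∏ s ∈ Finset.Icc 1 t, (1 - lam s ω * Xt s ω)) :
    (Supermartingale Et ℱ μ ∧ (∀ ω, Et 0 ω = 1) ∧ ∀ t ω, 0 ≤ Et t ω) ∧
      ∀ t, 1 ≤ t → μ[Xt t | ℱ (t - 1)] =ᵐ[μ] μ[X t | ℱ (t - 1)] :=
  sparse_verifier_eprocess_general ℱ α πmin hπmin pr B X lam hprmeas hprval hBmeas hBval hXmeas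
    hXbdd hXnull hcondind hlammeas hlamval Xt Et hXt hEt
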